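/- If n is odd, then every spiky function on E_n is the connectivity function of a matroid. -/

import Mathlib

/-!
The matroid is a spike `S(I)` for an independent set `I` of the hypercube `H_n`: a set is
independent when it has at most `n` elements, contains at most one full leg and is not in `I`.
Everything about it follows from the count `|X| = legCount X + #(full legs of X)`: augmentation
holds because `I` has no adjacent members, the rank is the free spike rank off `I` and `n - 1` on
`I`, so the connectivity is `λ_n` off the transversals and `n - |I ∩ {X, Xᶜ}|` on them.

For a spiky `λ`, let `X ∈ I` when `λ(X) = n - 2`, or `λ(X) = n - 1` and `X` contains an even
number of `x_i`. Adjacent transversals have opposite parities, and so do `X` and `Xᶜ` since `n`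
is odd. With `λ(X) + λ(Y) ≥ 2n - 2` for adjacent `X`, `Y`, this makes `I` independent and puts
exactly one of `X`, `Xᶜ` in `I` when `λ(X) = n - 1`.
-/

/-- The ground set of a rank-`n` spike: `n` disjoint legs, where the leg `i` consists of
`x_i = (i, true)` and `y_i = (i, false)`. -/
abbrev En (n : ℕ) := Fin n × Bool

/-- The `i`-th leg `L_i = {x_i, y_i}`. -/
def leg (n : ℕ) (i : Fin n) : Set (En n) := {(i, true), (i, false)}

/-- A transversal: a set containing exactly one element of each leg. -/
def IsTransversal {n : ℕ} (X : Set (En n)) : Prop :=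
  ∀ i : Fin n, ((i, true) ∈ X ∧ (i, false) ∉ X) ∨ ((i, true) ∉ X ∧ (i, false) ∈ X)

/-- The hypercube graph `H_n` on transversals: two transversals are adjacent iff they
differ in exactly one element (i.e. their symmetric difference has two elements). -/
def Hn (n : ℕ) : SimpleGraph (Set (En n)) where
  Adj X Y := IsTransversal X ∧ IsTransversal Y ∧ (symmDiff X Y).ncard = 2
  symm := ⟨fun X Y ⟨h1, h2, h3⟩ => ⟨h2, h1, by rwa [symmDiff_comm]⟩⟩
  loopless := ⟨fun X ⟨_, _, h3⟩ => by
    simp [symmDiff_self, Set.bot_eq_empty] at h3⟩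

/-- `I` is an independent set of the hypercube graph `H_n`. -/
def IndepInHn (n : ℕ) (I : Set (Set (En n))) : Prop :=
  (∀ X ∈ I, IsTransversal X) ∧ ∀ X ∈ I, ∀ Y ∈ I, ¬ (Hn n).Adj X Y

/-- `l(X)`: the number of legs which `X` meets. -/
noncomputable def legCount {n : ℕ} (X : Set (En n)) : ℕ :=
  Set.ncard {i : Fin n | (i, true) ∈ X ∨ (i, false) ∈ X}

/-- The rank of a set `X` in a matroid `M`: the largest cardinality of an independent
subset of `X`. -/
noncomputable def mrank {α : Type*} (M : Matroid α) (X : Set α) : ℕ :=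
  sSup {k | ∃ I, M.Indep I ∧ I ⊆ X ∧ I.ncard = k}

/-- The connectivity function of a matroid: μ_M(X) = r(X) + r(E−X) − r(E). -/
noncomputable def mconn {α : Type*} (M : Matroid α) (X : Set α) : ℤ :=
  (mrank M X : ℤ) + (mrank M (M.E \ X) : ℤ) - (mrank M M.E : ℤ)

/-- A circuit of a matroid: a minimal dependent subset of the ground set. -/
def IsCircuit {α : Type*} (M : Matroid α) (C : Set α) : Prop :=
  C ⊆ M.E ∧ ¬ M.Indep C ∧ ∀ D ⊂ C, M.Indep D

/-- The circuits `{x_i, y_i, x_j, y_j}` for `i < j` (i.e. unions of two distinct legs). -/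
def LegPairs (n : ℕ) : Set (Set (En n)) :=
  {C | ∃ i j : Fin n, i ≠ j ∧ C = leg n i ∪ leg n j}

/-- The circuit collection of the spike `S(I)`: unions of two legs, the transversals
in `I`, and all `(n+1)`-element sets containing none of the preceding circuits. -/
def SpikeCircuits (n : ℕ) (I : Set (Set (En n))) : Set (Set (En n)) :=
  (LegPairs n ∪ I) ∪ {C | C.ncard = n + 1 ∧ ∀ D ∈ LegPairs n ∪ I, ¬ D ⊆ C}

open Classical in
/-- The rank function of the free spike `S(∅)` (every rank-`n` spike has this rank
function away from the transversals). -/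
noncomputable def freeSpikeRank (n : ℕ) (X : Set (En n)) : ℕ :=
  if ∀ i : Fin n, ¬ Disjoint (leg n i) X then n
  else if ∃ i, leg n i ⊆ X then legCount X + 1
  else X.ncard

/-- `λ_n(X) = r_n(X) + r_n(E_n − X) − n`: the common value of the connectivity function
of any rank-`n` spike on a non-transversal set `X`. -/
noncomputable def lamN (n : ℕ) (X : Set (En n)) : ℤ :=
  (freeSpikeRank n X : ℤ) + (freeSpikeRank n Xᶜ : ℤ) - (n : ℤ)

/-- A spiky function: symmetric, extends `λ_n` on non-transversals, takes values in
`{n−2, n−1, n}` on transversals, and satisfies `λ(X) + λ(Y) ≥ 2n−2` for transversals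
`X`, `Y` differing in exactly one element. -/
noncomputable def IsSpiky (n : ℕ) (lam : Set (En n) → ℕ) : Prop :=
  (∀ X, lam X = lam Xᶜ) ∧
  (∀ X, ¬ IsTransversal X → (lam X : ℤ) = lamN n X) ∧
  (∀ X, IsTransversal X → lam X = n - 2 ∨ lam X = n - 1 ∨ lam X = n) ∧
  (∀ X Y, IsTransversal X → IsTransversal Y → (symmDiff X Y).ncard = 2 →
    2 * n - 2 ≤ lam X + lam Y)

open Set

lemma ncard_symmDiff_insert_insert {α : Type*} {s : Set α} {a b : α} (hab : a ≠ b)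
    (ha : a ∉ s) (hb : b ∉ s) : (symmDiff (insert a s) (insert b s)).ncard = 2 := by
  have : symmDiff (insert a s) (insert b s) = {a, b} := by
    ext x
    simp only [mem_symmDiff, mem_insert_iff, mem_singleton_iff]
    grind
  rw [this, ncard_pair hab]

lemma ncard_add_ncard_eq_ncard_symmDiff_add {α : Type*} [Finite α] (s t : Set α) :
    s.ncard + t.ncard = (symmDiff s t).ncard + 2 * (s ∩ t).ncard := by
  rw [Set.symmDiff_def, ncard_union_eq disjoint_sdiff_sdiff,
    ← ncard_inter_add_ncard_sdiff_eq_ncard s t, ← ncard_inter_add_ncard_sdiff_eq_ncard t s,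
    inter_comm t s]
  ring

section Legs

variable {n : ℕ}

def xLegs (X : Set (En n)) : Set (Fin n) := {i | (i, true) ∈ X}

def yLegs (X : Set (En n)) : Set (Fin n) := {i | (i, false) ∈ X}

def fullLegs (X : Set (En n)) : Set (Fin n) := {i | leg n i ⊆ X}

lemma leg_eq_preimage (i : Fin n) : leg n i = Prod.fst ⁻¹' {i} := by
  ext ⟨j, b⟩
  cases b <;> simp [leg, eq_comm]

lemma leg_subset_iff {i : Fin n} {X : Set (En n)} :
    leg n i ⊆ X ↔ (i, true) ∈ X ∧ (i, false) ∈ X := by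
  simp [leg, insert_subset_iff]

lemma fullLegs_eq_inter (X : Set (En n)) : fullLegs X = xLegs X ∩ yLegs X := by
  ext i
  exact leg_subset_iff

lemma image_fst_eq_union (X : Set (En n)) : Prod.fst '' X = xLegs X ∪ yLegs X := by
  ext i
  constructor
  · rintro ⟨⟨j, b⟩, hX, rfl⟩
    cases b
    exacts [Or.inr hX, Or.inl hX]
  · rintro (h | h)
    exacts [⟨_, h, rfl⟩, ⟨_, h, rfl⟩]

lemma legCount_eq_ncard_image (X : Set (En n)) : legCount X = (Prod.fst '' X).ncard := by
  rw [image_fst_eq_union]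
  rfl

lemma ncard_eq_ncard_xLegs_add_ncard_yLegs (X : Set (En n)) :
    X.ncard = (xLegs X).ncard + (yLegs X).ncard := by
  have hX : X = (·, true) '' xLegs X ∪ (·, false) '' yLegs X := by
    ext ⟨i, b⟩
    cases b <;> simp [xLegs, yLegs]
  have hdisj : Disjoint ((·, true) '' xLegs X) ((·, false) '' yLegs X : Set (En n)) := by
    simp [disjoint_left]
  rw [hX, ncard_union_eq hdisj, ncard_image_of_injective _ (fun _ _ h => (Prod.mk.inj h).1),
    ncard_image_of_injective _ (fun _ _ h => (Prod.mk.inj h).1)]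
  simp [xLegs, yLegs]

theorem ncard_eq_legCount_add (X : Set (En n)) : X.ncard = legCount X + (fullLegs X).ncard := by
  rw [legCount_eq_ncard_image, image_fst_eq_union, fullLegs_eq_inter,
    ncard_union_add_ncard_inter, ncard_eq_ncard_xLegs_add_ncard_yLegs]

lemma legCount_le (X : Set (En n)) : legCount X ≤ n := by
  simpa [legCount_eq_ncard_image] using ncard_le_card (Prod.fst '' X)

lemma legCount_mono {X Y : Set (En n)} (h : X ⊆ Y) : legCount X ≤ legCount Y := by
  simpa only [legCount_eq_ncard_image] using ncard_le_ncard (image_mono h)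

lemma legCount_eq_iff {X : Set (En n)} : legCount X = n ↔ Prod.fst '' X = univ := by
  rw [legCount_eq_ncard_image]
  refine ⟨fun h => ?_, fun h => by simp [h]⟩
  by_contra hne
  simpa [h] using ncard_lt_card hne

lemma not_disjoint_leg_iff {i : Fin n} {X : Set (En n)} :
    ¬ Disjoint (leg n i) X ↔ i ∈ Prod.fst '' X := by
  simp [leg_eq_preimage, not_disjoint_iff, eq_comm]

theorem freeSpikeRank_eq_min (X : Set (En n)) :
    freeSpikeRank n X = min n (min (legCount X + 1) X.ncard) := by
  have hcount := ncard_eq_legCount_add X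
  have hle := legCount_le X
  rw [freeSpikeRank]
  split_ifs with hall hfull
  · have : legCount X = n := legCount_eq_iff.2 (eq_univ_of_forall fun i =>
      not_disjoint_leg_iff.1 (hall i))
    omega
  · obtain ⟨j, hj⟩ := hfull
    have : legCount X ≠ n := fun h => hall fun i => not_disjoint_leg_iff.2
      (legCount_eq_iff.1 h ▸ mem_univ i)
    have : 0 < (fullLegs X).ncard := (ncard_pos (toFinite _)).2 ⟨j, hj⟩
    omega
  · have : fullLegs X = ∅ := eq_empty_of_forall_notMem fun i hi => hfull ⟨i, hi⟩
    rw [this, ncard_empty] at hcount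
    omega

namespace IsTransversal

variable {X : Set (En n)}

lemma fullLegs_eq_empty (hX : IsTransversal X) : fullLegs X = ∅ :=
  eq_empty_of_forall_notMem fun i hi => by
    rcases hX i with ⟨-, h⟩ | ⟨h, -⟩
    exacts [h (leg_subset_iff.1 hi).2, h (leg_subset_iff.1 hi).1]

lemma image_fst_eq_univ (hX : IsTransversal X) : Prod.fst '' X = univ :=
  eq_univ_of_forall fun i => by
    rcases hX i with ⟨h, -⟩ | ⟨-, h⟩
    exacts [⟨_, h, rfl⟩, ⟨_, h, rfl⟩]

lemma legCount_eq (hX : IsTransversal X) : legCount X = n :=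
  legCount_eq_iff.2 hX.image_fst_eq_univ

lemma ncard_eq (hX : IsTransversal X) : X.ncard = n := by
  simp [ncard_eq_legCount_add X, hX.legCount_eq, hX.fullLegs_eq_empty]

lemma freeSpikeRank_eq (hX : IsTransversal X) : freeSpikeRank n X = n := by
  rw [freeSpikeRank_eq_min, hX.legCount_eq, hX.ncard_eq]
  omega

protected lemma compl (hX : IsTransversal X) : IsTransversal Xᶜ := fun i => by
  simpa only [mem_compl_iff, not_not, or_comm, and_comm] using hX i

end IsTransversal

lemma not_isTransversal_of_mem_fullLegs {X : Set (En n)} {i : Fin n} (hi : i ∈ fullLegs X) :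
    ¬ IsTransversal X :=
  fun hX => hX.fullLegs_eq_empty.subset hi

lemma fullLegs_mono {X Y : Set (En n)} (h : X ⊆ Y) : fullLegs X ⊆ fullLegs Y :=
  fun _ hi => hi.trans h

lemma ncard_fullLegs_insert_le (e : En n) (X : Set (En n)) :
    (fullLegs (insert e X)).ncard ≤ (fullLegs X).ncard + 1 := by
  have := ncard_eq_legCount_add X
  have := ncard_eq_legCount_add (insert e X)
  have := ncard_insert_le e X
  have := legCount_mono (subset_insert e X)
  omega

lemma ncard_fullLegs_insert_of_fst_notMem {e : En n} {X : Set (En n)}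
    (he : e.1 ∉ Prod.fst '' X) : (fullLegs (insert e X)).ncard = (fullLegs X).ncard := by
  have heX : e ∉ X := fun h => he (mem_image_of_mem _ h)
  have := ncard_eq_legCount_add X
  have := ncard_eq_legCount_add (insert e X)
  rw [ncard_insert_of_notMem heX, legCount_eq_ncard_image, image_insert_eq,
    ncard_insert_of_notMem he, ← legCount_eq_ncard_image] at this
  omega

lemma ncard_le_ncard_of_image_fst_subset {X Y : Set (En n)} (hX : (fullLegs X).ncard ≤ 1)
    (hY : (fullLegs Y).Nonempty) (hXY : Prod.fst '' X ⊆ Prod.fst '' Y) : X.ncard ≤ Y.ncard := by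
  have := ncard_eq_legCount_add X
  have := ncard_eq_legCount_add Y
  have : legCount X ≤ legCount Y := by
    simpa only [legCount_eq_ncard_image] using ncard_le_ncard hXY
  have := (ncard_pos (toFinite _)).2 hY
  omega

end Legs

section SpikeMatroid

variable {n : ℕ} {I : Set (Set (En n))}

/-- Independence in the spike `S(I)`: its circuits are the unions of two legs, the members
of `I`, and the `(n+1)`-sets containing none of these. -/
def IsSpikeIndep (I : Set (Set (En n))) (J : Set (En n)) : Prop :=
  J.ncard ≤ n ∧ (fullLegs J).ncard ≤ 1 ∧ J ∉ I

lemma isSpikeIndep_empty (hn : 0 < n) (hI : ∀ X ∈ I, IsTransversal X) : IsSpikeIndep I ∅ := by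
  refine ⟨by simp, ?_, fun h => hn.ne (by simpa using (hI ∅ h).ncard_eq)⟩
  simp only [fullLegs, leg_subset_iff, mem_empty_iff_false, and_false, ofPred_false, ncard_empty,
    zero_le]

lemma IsSpikeIndep.subset (hI : ∀ X ∈ I, IsTransversal X) {J K : Set (En n)}
    (hK : IsSpikeIndep I K) (hJK : J ⊆ K) : IsSpikeIndep I J := by
  refine ⟨(ncard_le_ncard hJK).trans hK.1, (ncard_le_ncard (fullLegs_mono hJK)).trans hK.2.1,
    fun hJ => hK.2.2 ?_⟩
  have hJK' : J = K := eq_of_subset_of_ncard_le hJK (by rw [(hI J hJ).ncard_eq]; exact hK.1)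
  exact hJK' ▸ hJ

lemma IndepInHn.exists_insert_notMem (hI : IndepInHn n I)
    {J K : Set (En n)} (hK : K ∉ I) (hlt : J.ncard < K.ncard) :
    ∃ e ∈ K, e ∉ J ∧ insert e J ∉ I := by
  by_contra! hmem
  obtain ⟨e, heK, heJ⟩ : ∃ e ∈ K, e ∉ J :=
    not_subset.1 fun h => (ncard_le_ncard h).not_gt hlt
  obtain ⟨f, hfK, hf⟩ : ∃ f ∈ K, f ∉ insert e J := not_subset.1 fun h => hK <|
    eq_of_subset_of_ncard_le h (by rw [ncard_insert_of_notMem heJ]; omega) ▸ hmem e heK heJ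
  rw [mem_insert_iff, not_or] at hf
  exact hI.2 _ (hmem e heK heJ) _ (hmem f hfK hf.2) ⟨hI.1 _ (hmem e heK heJ),
    hI.1 _ (hmem f hfK hf.2), ncard_symmDiff_insert_insert (Ne.symm hf.1) heJ hf.2⟩

/-- If `J` has no full leg, a bad augmentation lands in `I`, which `IndepInHn` forbids for all
but one element of `K`. If `J` has a full leg, a bad augmentation creates a second one, so `K`
meets only legs met by `J` and is no larger than `J`. -/
lemma IsSpikeIndep.exists_insert (hI : IndepInHn n I) {J K : Set (En n)}
    (hJ : IsSpikeIndep I J) (hK : IsSpikeIndep I K) (hlt : J.ncard < K.ncard) :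
    ∃ e ∈ K, e ∉ J ∧ IsSpikeIndep I (insert e J) := by
  by_contra! hbad
  have hinsert_mem :
      ∀ e ∈ K, e ∉ J → (fullLegs (insert e J)).ncard ≤ 1 → insert e J ∈ I := by
    intro e heK heJ hfull
    by_contra hnot
    refine hbad e heK heJ ⟨?_, hfull, hnot⟩
    rw [ncard_insert_of_notMem heJ]
    exact hlt.trans_le hK.1
  rcases (fullLegs J).eq_empty_or_nonempty with hJ0 | hJfull
  · obtain ⟨e, heK, heJ, hnotI⟩ := hI.exists_insert_notMem hK.2.2 hlt
    refine hnotI (hinsert_mem e heK heJ ?_)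
    simpa [hJ0] using ncard_fullLegs_insert_le e J
  · refine (ncard_le_ncard_of_image_fst_subset hK.2.1 hJfull ?_).not_gt hlt
    rintro _ ⟨e, heK, rfl⟩
    by_cases heJ : e ∈ J
    · exact mem_image_of_mem _ heJ
    by_contra hnew
    obtain ⟨j, hj⟩ := hJfull
    refine not_isTransversal_of_mem_fullLegs (fullLegs_mono (subset_insert e J) hj)
      (hI.1 _ (hinsert_mem e heK heJ ?_))
    rw [ncard_fullLegs_insert_of_fst_notMem hnew]
    exact hJ.2.1

def spike (hn : 0 < n) (hI : IndepInHn n I) : Matroid (En n) :=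
  (IndepMatroid.ofFinite finite_univ (IsSpikeIndep I) (isSpikeIndep_empty hn hI.1)
    (fun _ _ hK hJK => hK.subset hI.1 hJK) (fun _ _ hJ hK hlt => hJ.exists_insert hI hK hlt)
    (fun _ _ => subset_univ _)).matroid

lemma spike_indep_iff {hn : 0 < n} {hI : IndepInHn n I} {J : Set (En n)} :
    (spike hn hI).Indep J ↔ IsSpikeIndep I J := by
  rw [spike, IndepMatroid.matroid_indep_iff, IndepMatroid.ofFinite_indep]

lemma spike_ground {hn : 0 < n} {hI : IndepInHn n I} : (spike hn hI).E = univ := rfl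

end SpikeMatroid

section SpikeRank

variable {n : ℕ} {I : Set (Set (En n))}

lemma ncard_leg (i : Fin n) : (leg n i).ncard = 2 :=
  ncard_pair (by simp)

lemma image_fst_leg (i : Fin n) : Prod.fst '' leg n i = {i} := by
  rw [leg_eq_preimage, image_preimage_eq _ Prod.fst_surjective]

lemma exists_injOn_fst_subset_diff_leg {X : Set (En n)} {j : Fin n} (hj : j ∈ fullLegs X)
    {k : ℕ} (hk : k + 1 ≤ legCount X) :
    ∃ S ⊆ X \ leg n j, InjOn Prod.fst S ∧ S.ncard = k := by
  obtain ⟨T, hTX, hT⟩ := exists_subset_bijOn (X \ leg n j) Prod.fst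
  have hjX : j ∈ Prod.fst '' X := ⟨_, (leg_subset_iff.1 hj).1, rfl⟩
  have hTcard : T.ncard = legCount X - 1 := by
    rw [← hT.injOn.ncard_image, hT.image_eq, leg_eq_preimage, image_sdiff_preimage,
      ncard_sdiff_singleton_of_mem hjX, legCount_eq_ncard_image]
  obtain ⟨S, hST, hS⟩ := exists_subset_card_eq (s := T) (n := k) (by omega)
  exact ⟨S, hST.trans hTX, hT.injOn.mono hST, hS⟩

/-- A full leg of `X` together with a partial transversal of the other legs met by `X`. -/
lemma exists_isSpikeIndep_subset (hn : 2 ≤ n) (hI : ∀ X ∈ I, IsTransversal X)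
    {X : Set (En n)} (hX : X ∉ I) :
    ∃ J ⊆ X, IsSpikeIndep I J ∧ J.ncard = freeSpikeRank n X := by
  have hXcount := ncard_eq_legCount_add X
  have hXle := legCount_le X
  rw [freeSpikeRank_eq_min]
  rcases (fullLegs X).eq_empty_or_nonempty with hX0 | ⟨j, hj⟩
  · rw [hX0, ncard_empty] at hXcount
    exact ⟨X, subset_rfl, ⟨by omega, by simp [hX0], hX⟩, by omega⟩
  have hXfull : 0 < (fullLegs X).ncard := (ncard_pos (toFinite _)).2 ⟨j, hj⟩
  have hXmet : 0 < legCount X := by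
    rw [legCount_eq_ncard_image]
    exact (ncard_pos (toFinite _)).2 ⟨j, _, (leg_subset_iff.1 hj).1, rfl⟩
  obtain ⟨S, hSX, hSinj, hScard⟩ :=
    exists_injOn_fst_subset_diff_leg hj (k := min (n - 2) (legCount X - 1)) (by omega)
  have hdisj : Disjoint (leg n j) S := disjoint_of_subset_right hSX disjoint_sdiff_right
  have hjS : j ∉ Prod.fst '' S := by
    rintro ⟨e, heS, rfl⟩
    exact disjoint_left.1 hdisj (by rw [leg_eq_preimage]; rfl) heS
  have hJcard : (leg n j ∪ S).ncard = S.ncard + 2 := by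
    rw [ncard_union_eq hdisj, ncard_leg, add_comm]
  have hJmet : legCount (leg n j ∪ S) = S.ncard + 1 := by
    rw [legCount_eq_ncard_image, image_union, image_fst_leg,
      ncard_union_eq (disjoint_singleton_left.2 hjS), ncard_singleton, hSinj.ncard_image, add_comm]
  have hJcount := ncard_eq_legCount_add (leg n j ∪ S)
  refine ⟨leg n j ∪ S, union_subset hj (hSX.trans sdiff_subset),
    ⟨by omega, by omega, fun hJ => ?_⟩, by omega⟩
  exact not_isTransversal_of_mem_fullLegs (subset_union_left (s := leg n j)) (hI _ hJ)

lemma IsSpikeIndep.ncard_le_freeSpikeRank {J X : Set (En n)} (hJ : IsSpikeIndep I J)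
    (hJX : J ⊆ X) : J.ncard ≤ freeSpikeRank n X := by
  have := ncard_eq_legCount_add J
  have := legCount_mono hJX
  have := ncard_le_ncard hJX
  have := hJ.1
  have := hJ.2.1
  rw [freeSpikeRank_eq_min]
  omega

lemma mrank_eq_ncard_of_forall_le {α : Type*} {M : Matroid α} {X J : Set α} (hJ : M.Indep J)
    (hJX : J ⊆ X) (hmax : ∀ J', M.Indep J' → J' ⊆ X → J'.ncard ≤ J.ncard) :
    mrank M X = J.ncard := by
  have hbdd : ∀ k ∈ {k | ∃ J', M.Indep J' ∧ J' ⊆ X ∧ J'.ncard = k}, k ≤ J.ncard := by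
    rintro _ ⟨J', hJ', hJ'X, rfl⟩
    exact hmax J' hJ' hJ'X
  exact le_antisymm (csSup_le ⟨_, J, hJ, hJX, rfl⟩ hbdd)
    (le_csSup ⟨_, hbdd⟩ ⟨J, hJ, hJX, rfl⟩)

variable {M : Matroid (En n)}

lemma mrank_of_notMem (hM : ∀ J, M.Indep J ↔ IsSpikeIndep I J) (hn : 2 ≤ n)
    (hI : ∀ X ∈ I, IsTransversal X) {X : Set (En n)} (hX : X ∉ I) :
    mrank M X = freeSpikeRank n X := by
  obtain ⟨J, hJX, hJ, hJcard⟩ := exists_isSpikeIndep_subset hn hI hX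
  rw [← hJcard]
  exact mrank_eq_ncard_of_forall_le ((hM J).2 hJ) hJX fun J' hJ' hJ'X =>
    hJcard ▸ ((hM J').1 hJ').ncard_le_freeSpikeRank hJ'X

lemma mrank_add_one_of_mem (hM : ∀ J, M.Indep J ↔ IsSpikeIndep I J) (hn : 0 < n)
    (hI : ∀ X ∈ I, IsTransversal X) {X : Set (En n)} (hX : X ∈ I) : mrank M X + 1 = n := by
  have hXcard := (hI X hX).ncard_eq
  obtain ⟨x, hx⟩ : X.Nonempty := nonempty_of_ncard_ne_zero (by omega)
  have hJcard : (X \ {x}).ncard = n - 1 := by rw [ncard_sdiff_singleton_of_mem hx, hXcard]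
  have hJ : IsSpikeIndep I (X \ {x}) := by
    refine ⟨by omega, ?_, fun hJ => by have := (hI _ hJ).ncard_eq; omega⟩
    have := ncard_le_ncard (fullLegs_mono (sdiff_subset (s := X) (t := {x})))
    rw [(hI X hX).fullLegs_eq_empty, ncard_empty] at this
    omega
  rw [mrank_eq_ncard_of_forall_le ((hM _).2 hJ) sdiff_subset fun J' hJ' hJ'X => ?_]
  · omega
  have hne : J' ≠ X := fun h => ((hM J').1 hJ').2.2 (h ▸ hX)
  have := ncard_lt_ncard (ssubset_of_subset_of_ne hJ'X hne)
  omega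

end SpikeRank

section SpikeConnectivity

variable {n : ℕ} {I : Set (Set (En n))} {M : Matroid (En n)}

open Classical in
lemma mrank_of_isTransversal (hM : ∀ J, M.Indep J ↔ IsSpikeIndep I J) (hn : 2 ≤ n)
    (hI : ∀ X ∈ I, IsTransversal X) {X : Set (En n)} (hX : IsTransversal X) :
    (mrank M X : ℤ) = n - if X ∈ I then 1 else 0 := by
  split_ifs with hXI
  · have := mrank_add_one_of_mem hM (by omega) hI hXI
    omega
  · rw [mrank_of_notMem hM hn hI hXI, hX.freeSpikeRank_eq]
    ring

lemma mconn_eq_mrank_add_mrank_compl (hM : ∀ J, M.Indep J ↔ IsSpikeIndep I J) (hE : M.E = univ)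
    (hn : 2 ≤ n) (hI : ∀ X ∈ I, IsTransversal X) (X : Set (En n)) :
    mconn M X = mrank M X + mrank M Xᶜ - n := by
  have huniv : legCount (univ : Set (En n)) = n :=
    legCount_eq_iff.2 (image_univ_of_surjective Prod.fst_surjective)
  have hfull : (⟨0, by omega⟩ : Fin n) ∈ fullLegs univ := subset_univ _
  have hrank : mrank M univ = n := by
    rw [mrank_of_notMem hM hn hI fun h => not_isTransversal_of_mem_fullLegs hfull (hI _ h),
      freeSpikeRank_eq_min, ncard_eq_legCount_add, huniv]
    omega
  rw [mconn, hE, hrank, compl_eq_univ_sdiff]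

open Classical in
lemma mconn_of_isTransversal (hM : ∀ J, M.Indep J ↔ IsSpikeIndep I J) (hE : M.E = univ)
    (hn : 2 ≤ n) (hI : ∀ X ∈ I, IsTransversal X) {X : Set (En n)} (hX : IsTransversal X) :
    mconn M X = n - (if X ∈ I then 1 else 0) - (if Xᶜ ∈ I then 1 else 0) := by
  rw [mconn_eq_mrank_add_mrank_compl hM hE hn hI, mrank_of_isTransversal hM hn hI hX,
    mrank_of_isTransversal hM hn hI hX.compl]
  ring

lemma mconn_of_not_isTransversal (hM : ∀ J, M.Indep J ↔ IsSpikeIndep I J) (hE : M.E = univ)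
    (hn : 2 ≤ n) (hI : ∀ X ∈ I, IsTransversal X) {X : Set (En n)} (hX : ¬ IsTransversal X) :
    mconn M X = lamN n X := by
  have hXc : ¬ IsTransversal Xᶜ := fun h => hX (compl_compl X ▸ h.compl)
  rw [mconn_eq_mrank_add_mrank_compl hM hE hn hI, mrank_of_notMem hM hn hI fun h => hX (hI X h),
    mrank_of_notMem hM hn hI fun h => hXc (hI _ h), lamN]

end SpikeConnectivity

section Spiky

variable {n : ℕ} {lam : Set (En n) → ℕ}

lemma IsTransversal.symmDiff_eq {X Y : Set (En n)} (hX : IsTransversal X) (hY : IsTransversal Y) :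
    symmDiff X Y = symmDiff (xLegs X) (xLegs Y) ×ˢ univ := by
  ext ⟨i, b⟩
  have := hX i
  have := hY i
  simp only [mem_symmDiff, mem_prod, mem_univ, and_true, xLegs, mem_ofPred_eq]
  cases b <;> tauto

lemma IsTransversal.odd_ncard_xLegs_add {X Y : Set (En n)} (hX : IsTransversal X)
    (hY : IsTransversal Y) (h2 : (symmDiff X Y).ncard = 2) :
    Odd ((xLegs X).ncard + (xLegs Y).ncard) := by
  rw [hX.symmDiff_eq hY, ncard_prod, ncard_univ, Nat.card_eq_fintype_card, Fintype.card_bool] at h2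
  rw [ncard_add_ncard_eq_ncard_symmDiff_add, show (symmDiff (xLegs X) (xLegs Y)).ncard = 1 by omega]
  exact odd_one.add_even (even_two_mul _)

lemma ncard_xLegs_add_ncard_xLegs_compl (X : Set (En n)) :
    (xLegs X).ncard + (xLegs Xᶜ).ncard = n := by
  rw [show xLegs Xᶜ = (xLegs X)ᶜ from rfl, ncard_add_ncard_compl]
  simp

def spikyIndepSet (lam : Set (En n) → ℕ) : Set (Set (En n)) :=
  {X | IsTransversal X ∧ (lam X + 2 = n ∨ lam X + 1 = n ∧ Even (xLegs X).ncard)}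

lemma indepInHn_spikyIndepSet (hs : IsSpiky n lam) : IndepInHn n (spikyIndepSet lam) := by
  refine ⟨fun X hX => hX.1, fun X hX Y hY ⟨hXt, hYt, h2⟩ => ?_⟩
  have hsum := hs.2.2.2 X Y hXt hYt h2
  have hodd := hXt.odd_ncard_xLegs_add hYt h2
  rcases hX.2 with hx | ⟨hx, hxe⟩ <;> rcases hY.2 with hy | ⟨hy, hye⟩
  · omega
  · omega
  · omega
  · exact Nat.not_odd_iff_even.2 (hxe.add hye) hodd

open Classical in
lemma lam_eq_of_isTransversal (hodd : Odd n) (hs : IsSpiky n lam) {X : Set (En n)}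
    (hX : IsTransversal X) :
    (lam X : ℤ) = n - (if X ∈ spikyIndepSet lam then 1 else 0)
      - (if Xᶜ ∈ spikyIndepSet lam then 1 else 0) := by
  have hparity := ncard_xLegs_add_ncard_xLegs_compl X
  rw [Nat.odd_iff] at hodd
  have hvals := hs.2.2.1 X hX
  simp only [spikyIndepSet, mem_ofPred_eq, hX, hX.compl, true_and, ← hs.1 X, Nat.even_iff]
  split_ifs <;> omega

end Spiky

/-- If `n` is odd, every spiky function on `E_n` is the connectivity function of a
matroid. -/
theorem stmt13 {n : ℕ} (hn : 2 < n) (hodd : Odd n)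
    (lam : Set (En n) → ℕ) (hs : IsSpiky n lam) :
    ∃ M : Matroid (En n), M.E = Set.univ ∧ ∀ X, (lam X : ℤ) = mconn M X := by
  have hI := indepInHn_spikyIndepSet hs
  refine ⟨spike (by omega) hI, spike_ground, fun X => ?_⟩
  by_cases hX : IsTransversal X
  · rw [mconn_of_isTransversal (fun _ => spike_indep_iff) spike_ground hn.le hI.1 hX,
      lam_eq_of_isTransversal hodd hs hX]
  · rw [mconn_of_not_isTransversal (fun _ => spike_indep_iff) spike_ground hn.le hI.1 hX,
      hs.2.1 X hX]
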